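/- Let f(p) = 1 - exp(-a p) for a > 0 and p ∈ [0,1], and consider maximizing ∑_{m=1}^{M} p_r(m) f(p(m)) over p : Fin M → [0,1] with ∑_m p(m) ≤ N, where p_r(m) > 0. Then at any optimum, for any two files i, j with p*(i), p*(j) ∈ (0,1), the weighted marginal gains are equal: p_r(i) a exp(-a p*(i)) = p_r(j) a exp(-a p*(j)); consequently p*(i) - p*(j) = (1/a) ln(p_r(i)/p_r(j)), so more popular files get (weakly) larger caching probabilities. -/

import Mathlib

/-!
Moving mass `t` from file `j` to file `i` keeps the budget unchanged, and for `|t|` small it keeps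
every coordinate in `[0, 1]` because both `p*(i)` and `p*(j)` are interior. Hence `t = 0` is a local
maximum of the hit probability along this line, and Fermat's rule makes its derivative
`p_r(i) a e^{-a p*(i)} - p_r(j) a e^{-a p*(j)}` vanish. Taking logarithms gives the difference formula.
-/

open Real Filter Topology Finset

section HitProbability

variable {ι : Type*} [Fintype ι]

noncomputable def hitProbability (w : ι → ℝ) (a : ℝ) (q : ι → ℝ) : ℝ :=
  ∑ m, w m * (1 - exp (-(a * q m)))

theorem hasDerivAt_hitProbability_add_smul (w : ι → ℝ) (a : ℝ) (p v : ι → ℝ) :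
    HasDerivAt (fun t : ℝ => hitProbability w a (p + t • v))
      (∑ m, w m * a * exp (-(a * p m)) * v m) 0 := by
  simp only [hitProbability, Pi.add_apply, Pi.smul_apply, smul_eq_mul]
  refine HasDerivAt.fun_sum fun m _ => ?_
  have hline : HasDerivAt (fun t : ℝ => -(a * (p m + t * v m))) (-(a * v m)) 0 := by
    simpa using (((hasDerivAt_id (0 : ℝ)).mul_const (v m)).const_add (p m)).const_mul a |>.fun_neg
  refine ((hline.exp.const_sub 1).const_mul (w m)).congr_deriv ?_
  rw [zero_mul, add_zero]
  ring

theorem eventually_add_smul_mem_Icc {p v : ι → ℝ} (hp : ∀ m, p m ∈ Set.Icc (0 : ℝ) 1)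
    (hv : ∀ m, v m ≠ 0 → p m ∈ Set.Ioo (0 : ℝ) 1) :
    ∀ᶠ t in 𝓝 (0 : ℝ), ∀ m, (p + t • v) m ∈ Set.Icc (0 : ℝ) 1 := by
  refine eventually_all.2 fun m => ?_
  by_cases hvm : v m = 0
  · simp [hvm, hp m]
  · have hcont : Continuous fun t : ℝ => p m + t * v m := by fun_prop
    have hmem : Set.Ioo (0 : ℝ) 1 ∈ 𝓝 (p m + 0 * v m) := by
      simpa using isOpen_Ioo.mem_nhds (hv m hvm)
    filter_upwards [hcont.continuousAt hmem] with t ht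
    exact Set.Ioo_subset_Icc_self ht

theorem sum_marginal_mul_eq_zero_of_isMax {w : ι → ℝ} {a B : ℝ} {p v : ι → ℝ}
    (hp : ∀ m, p m ∈ Set.Icc (0 : ℝ) 1) (hpB : ∑ m, p m ≤ B)
    (hmax : ∀ q : ι → ℝ, (∀ m, q m ∈ Set.Icc (0 : ℝ) 1) → ∑ m, q m ≤ B →
      hitProbability w a q ≤ hitProbability w a p)
    (hv₀ : ∑ m, v m = 0) (hv : ∀ m, v m ≠ 0 → p m ∈ Set.Ioo (0 : ℝ) 1) :
    ∑ m, w m * a * exp (-(a * p m)) * v m = 0 := by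
  have hbudget (t : ℝ) : ∑ m, (p + t • v) m = ∑ m, p m := by
    simp [sum_add_distrib, ← mul_sum, hv₀]
  have hloc : IsLocalMax (fun t : ℝ => hitProbability w a (p + t • v)) 0 := by
    filter_upwards [eventually_add_smul_mem_Icc hp hv] with t ht
    simpa using hmax _ ht ((hbudget t).trans_le hpB)
  exact hloc.hasDerivAt_eq_zero (hasDerivAt_hitProbability_add_smul w a p v)

end HitProbability

theorem sum_mul_pi_single_sub_pi_single {ι : Type*} [Fintype ι] [DecidableEq ι]
    (c : ι → ℝ) (i j : ι) :
    ∑ m, c m * (Pi.single i 1 - Pi.single j 1 : ι → ℝ) m = c i - c j := by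
  simp [mul_sub, sum_sub_distrib, Pi.single_apply]

theorem sub_eq_log_div_of_mul_exp_eq {x y a s t : ℝ} (hx : 0 < x) (hy : 0 < y) (ha : a ≠ 0)
    (h : x * exp (-(a * s)) = y * exp (-(a * t))) : s - t = 1 / a * log (x / y) := by
  have hlog := congrArg log h
  rw [log_mul hx.ne' (exp_ne_zero _), log_mul hy.ne' (exp_ne_zero _), log_exp, log_exp] at hlog
  rw [log_div hx.ne' hy.ne']
  field_simp
  linarith

/-- KKT equal-marginal condition for the GCP hit-probability maximization: at an
optimum, any two files with interior caching probabilities have equal weighted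
marginal gains, and hence `p*(i) - p*(j) = (1/a) ln(p_r(i)/p_r(j))`. -/
theorem gcp_kkt_equal_marginals (M : ℕ) (N : ℕ) (a : ℝ) (ha : 0 < a)
    (p_r : Fin M → ℝ) (hpr : ∀ m, 0 < p_r m)
    (pstar : Fin M → ℝ) (hfeas : ∀ m, pstar m ∈ Set.Icc (0 : ℝ) 1)
    (hsum : ∑ m, pstar m ≤ (N : ℝ))
    (hopt : ∀ q : Fin M → ℝ, (∀ m, q m ∈ Set.Icc (0 : ℝ) 1) → ∑ m, q m ≤ (N : ℝ) →
      ∑ m, p_r m * (1 - Real.exp (-(a * q m)))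
        ≤ ∑ m, p_r m * (1 - Real.exp (-(a * pstar m)))) :
    ∀ i j : Fin M, pstar i ∈ Set.Ioo (0 : ℝ) 1 → pstar j ∈ Set.Ioo (0 : ℝ) 1 →
      p_r i * a * Real.exp (-(a * pstar i)) = p_r j * a * Real.exp (-(a * pstar j)) ∧
      pstar i - pstar j = (1 / a) * Real.log (p_r i / p_r j) := by
  intro i j hi hj
  have hsupp : ∀ m, (Pi.single i 1 - Pi.single j 1 : Fin M → ℝ) m ≠ 0 →
      pstar m ∈ Set.Ioo (0 : ℝ) 1 := by
    intro m hm
    by_cases hmi : m = i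
    · exact hmi ▸ hi
    by_cases hmj : m = j
    · exact hmj ▸ hj
    simp [hmi, hmj] at hm
  have hstat := sum_marginal_mul_eq_zero_of_isMax hfeas hsum hopt (by simp) hsupp
  have hmarg : p_r i * a * exp (-(a * pstar i)) = p_r j * a * exp (-(a * pstar j)) := by
    rwa [sum_mul_pi_single_sub_pi_single, sub_eq_zero] at hstat
  refine ⟨hmarg, sub_eq_log_div_of_mul_exp_eq (hpr i) (hpr j) ha.ne' ?_⟩
  rw [mul_right_comm, mul_right_comm (p_r j)] at hmarg
  exact mul_right_cancel₀ ha.ne' hmarg
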